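/- arXiv:1604.08000 — 2 statements merged into one kernel-verified Lean document; each statement's English description precedes it below -/
import Mathlib

section
/- Let M be a prime, let χ be a nontrivial Dirichlet character modulo M, let w be an integer with gcd(w, M) = 1, and let v be any integer. Then ∑_{a mod M} χ(a) · S(w·a, w·v; M) · e_M( −w·(a + v) ) = χ̄(w) · g_χ · D_χ(w·v; M), where χ̄ is the complex conjugate character of χ. -/
open Complex

/-- `eAdd q x = exp(2πi x / q)`. -/
noncomputable def eAdd (q : ℕ) (x : ℤ) : ℂ :=
  Complex.exp (2 * Real.pi * Complex.I * x / q)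

/-- The Kloosterman sum `S(m, n; q) = ∑_{x mod q, (x,q)=1} e_q(m x + n x*)`. -/
noncomputable def klo (m n : ℤ) (q : ℕ) [NeZero q] : ℂ :=
  ∑ x : (ZMod q)ˣ,
    eAdd q (m * ((x : ZMod q).val : ℤ) + n * (((x⁻¹ : (ZMod q)ˣ) : ZMod q).val : ℤ))

/-- The twisted Kloosterman sum `S_ψ(m, n; q)` for a Dirichlet character `ψ` mod `d`, `d ∣ q`. -/
noncomputable def kloTwist {d : ℕ} (ψ : DirichletCharacter ℂ d) (m n : ℤ) (q : ℕ)
    [NeZero q] (h : d ∣ q) : ℂ :=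
  ∑ x : (ZMod q)ˣ,
    ψ (ZMod.castHom h (ZMod d) (x : ZMod q)) *
      eAdd q (m * ((x : ZMod q).val : ℤ) + n * (((x⁻¹ : (ZMod q)ˣ) : ZMod q).val : ℤ))

/-- The Gauss sum `g_χ = ∑_{a mod M} χ(a) e_M(a)`. -/
noncomputable def gaussS {M : ℕ} [NeZero M] (χ : DirichletCharacter ℂ M) : ℂ :=
  ∑ a : ZMod M, χ a * eAdd M (a.val : ℤ)

/-- `D_χ(u; M) = ∑_{b mod M, (b(b−1),M)=1} χ̄(b−1) e_M((b* − 1) u)`. -/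
noncomputable def dSum {M : ℕ} [NeZero M] (χ : DirichletCharacter ℂ M) (u : ℤ) : ℂ :=
  ∑ b ∈ Finset.univ.filter (fun b : ZMod M => Nat.gcd (b * (b - 1)).val M = 1),
    (starRingEnd ℂ) (χ (b - 1)) * eAdd M (((b⁻¹ - 1 : ZMod M).val : ℤ) * u)

/-!
Opening the Kloosterman sum and exchanging the order of summation, the sum over `a` attached to a
unit `x` is the Gauss sum of `χ` against the additive character shifted by `w (x - 1)`. Because
`χ` is nontrivial on the field `ZMod M`, that shifted Gauss sum is `χ̄ (w (x - 1)) g_χ` for every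
shift, zero included; pulling out `χ̄ w g_χ` leaves exactly `D_χ(w v; M)`.
-/

open ZMod

lemma eAdd_eq_stdAddChar (q : ℕ) [NeZero q] (x : ℤ) : eAdd q x = stdAddChar (x : ZMod q) := by
  rw [stdAddChar_coe, eAdd]

lemma eAdd_natCast_val (q : ℕ) [NeZero q] (z : ZMod q) : eAdd q (z.val : ℤ) = stdAddChar z := by
  rw [eAdd_eq_stdAddChar, Int.cast_natCast, natCast_zmod_val]

lemma klo_eq_sum_stdAddChar (m n : ℤ) (q : ℕ) [NeZero q] :
    klo m n q = ∑ x : (ZMod q)ˣ,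
      stdAddChar ((m : ZMod q) * (x : ZMod q) + (n : ZMod q) * ((x⁻¹ : (ZMod q)ˣ) : ZMod q)) := by
  simp only [klo, eAdd_eq_stdAddChar]
  push_cast [natCast_zmod_val]
  rfl

lemma gaussS_eq_gaussSum {M : ℕ} [NeZero M] (χ : DirichletCharacter ℂ M) :
    gaussS χ = gaussSum χ stdAddChar := by
  simp only [gaussS, gaussSum, eAdd_natCast_val]

lemma Finset.sum_filter_isUnit_eq_sum_units {R A : Type*} [Monoid R] [Fintype R] [DecidableEq R]
    [AddCommMonoid A] (f : R → A) : ∑ b ∈ univ.filter IsUnit, f b = ∑ x : Rˣ, f x := by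
  have : univ.filter IsUnit = univ.map ⟨((↑) : Rˣ → R), Units.val_injective⟩ := by
    ext b; simp [IsUnit, eq_comm]
  rw [this, sum_map]
  rfl

lemma gaussSum_mulShift_eq_of_ne_one {F R : Type*} [Field F] [Fintype F] [CommRing R] [IsDomain R]
    {χ : MulChar F R} (hχ : χ ≠ 1) (ψ : AddChar F R) (t : F) :
    gaussSum χ (ψ.mulShift t) = χ⁻¹ t * gaussSum χ ψ := by
  rcases eq_or_ne t 0 with rfl | ht
  · simp [gaussSum, MulChar.sum_eq_zero_of_ne_one hχ, MulChar.map_zero]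
  · simpa using gaussSum_mulShift_eq χ ψ (Units.mk0 t ht)

lemma dSum_eq_sum_units {M : ℕ} [NeZero M] (χ : DirichletCharacter ℂ M) (u : ℤ) :
    dSum χ u = ∑ x : (ZMod M)ˣ,
      χ⁻¹ ((x : ZMod M) - 1) * stdAddChar ((((x⁻¹ : (ZMod M)ˣ) : ZMod M) - 1) * (u : ZMod M)) := by
  classical
  have hfilter : Finset.univ.filter (fun b : ZMod M => Nat.gcd (b * (b - 1)).val M = 1)
      = (Finset.univ.filter IsUnit).filter (fun b => IsUnit (b - 1)) := by
    ext b
    simp only [Finset.mem_filter, Finset.mem_univ, true_and, ← IsUnit.mul_iff]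
    rw [← Nat.Coprime, ← ZMod.isUnit_iff_coprime, natCast_zmod_val]
  rw [dSum, hfilter, Finset.sum_filter_of_ne, Finset.sum_filter_isUnit_eq_sum_units]
  · refine Finset.sum_congr rfl fun x _ => ?_
    rw [starRingEnd_apply, MulChar.star_apply', eAdd_eq_stdAddChar, ZMod.inv_coe_unit]
    push_cast [natCast_zmod_val]
    rfl
  · intro b _ hb
    by_contra h
    exact hb (by simp [MulChar.map_nonunit χ h])

theorem stmt_3_general (M : ℕ) [Fact M.Prime] (χ : DirichletCharacter ℂ M) (hχ : χ ≠ 1)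
    (w : ℤ) (v : ℤ) :
    ∑ a : ZMod M, χ a * klo (w * (a.val : ℤ)) (w * v) M * eAdd M (-(w * ((a.val : ℤ) + v))) =
      (starRingEnd ℂ) (χ ((w : ZMod M))) * gaussS χ * dSum χ (w * v) := by
  set ψ : AddChar (ZMod M) ℂ := stdAddChar
  have hsummand (a : ZMod M) :
      χ a * klo (w * (a.val : ℤ)) (w * v) M * eAdd M (-(w * ((a.val : ℤ) + v)))
      = ∑ x : (ZMod M)ˣ, χ a * ψ.mulShift (w * ((x : ZMod M) - 1)) a
          * ψ ((((x⁻¹ : (ZMod M)ˣ) : ZMod M) - 1) * ((w * v : ℤ) : ZMod M)) := by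
    rw [klo_eq_sum_stdAddChar, eAdd_eq_stdAddChar, Finset.mul_sum, Finset.sum_mul]
    refine Finset.sum_congr rfl fun x _ => ?_
    rw [mul_assoc, mul_assoc, AddChar.mulShift_apply, ← AddChar.map_add_eq_mul,
      ← AddChar.map_add_eq_mul]
    congr 2
    push_cast [natCast_zmod_val]
    ring
  calc _ = ∑ x : (ZMod M)ˣ, gaussSum χ (ψ.mulShift (w * ((x : ZMod M) - 1)))
          * ψ ((((x⁻¹ : (ZMod M)ˣ) : ZMod M) - 1) * ((w * v : ℤ) : ZMod M)) := by
        simp only [hsummand, gaussSum, Finset.sum_mul]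
        exact Finset.sum_comm
    _ = χ⁻¹ w * gaussSum χ ψ * ∑ x : (ZMod M)ˣ, χ⁻¹ ((x : ZMod M) - 1)
          * ψ ((((x⁻¹ : (ZMod M)ˣ) : ZMod M) - 1) * ((w * v : ℤ) : ZMod M)) := by
        simp only [gaussSum_mulShift_eq_of_ne_one hχ, map_mul, Finset.mul_sum]
        exact Finset.sum_congr rfl fun x _ => by ring
    _ = _ := by rw [dSum_eq_sum_units, gaussS_eq_gaussSum, starRingEnd_apply, MulChar.star_apply']

/-- Evaluation of the twisted character sum modulo a prime `M`. -/
theorem stmt_3 (M : ℕ) [Fact M.Prime] (χ : DirichletCharacter ℂ M) (hχ : χ ≠ 1)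
    (w : ℤ) (hw : Int.gcd w M = 1) (v : ℤ) :
    ∑ a : ZMod M, χ a * klo (w * (a.val : ℤ)) (w * v) M * eAdd M (-(w * ((a.val : ℤ) + v))) =
      (starRingEnd ℂ) (χ ((w : ZMod M))) * gaussS χ * dSum χ (w * v) :=
  stmt_3_general M χ hχ w v
end

section
/- (Twisted multiplicativity of Kloosterman sums.) Let q₁, q₂ be coprime positive integers, let d be a positive integer with d | q₁, and let ψ be a Dirichlet character modulo d. Then for all integers m, n, S_ψ(m, n; q₁·q₂) = S_ψ(m·q̄₂, n·q̄₂; q₁) · S(m·q̄₁, n·q̄₁; q₂), where q̄₂ denotes an integer inverse of q₂ modulo q₁ and q̄₁ denotes an integer inverse of q₁ modulo q₂. -/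
open Complex

/-!
The Chinese remainder theorem identifies `(ZMod (q₁ * q₂))ˣ` with `(ZMod q₁)ˣ × (ZMod q₂)ˣ`
through the two reduction maps. Since `q₂ b₂ + q₁ b₁ ≡ 1 (mod q₁ q₂)`, the additive character
splits as `e_{q₁q₂}(a) = e_{q₁}(b₂ a) e_{q₂}(b₁ a)`, and both `x` and `x⁻¹` reduce componentwise,
so each summand of `S_ψ(m, n; q₁q₂)` is the product of the corresponding summands of the two
smaller sums; `ψ` only sees the residue modulo `d ∣ q₁`.
-/

lemma eAdd_add (q : ℕ) (a b : ℤ) : eAdd q (a + b) = eAdd q a * eAdd q b := by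
  rw [eAdd, eAdd, eAdd, ← Complex.exp_add]
  congr 1
  push_cast
  ring

lemma eAdd_natCast_mul (q : ℕ) (k : ℤ) : eAdd q (q * k) = 1 := by
  rcases eq_or_ne q 0 with rfl | hq
  · simp [eAdd]
  have hq' : (q : ℂ) ≠ 0 := Nat.cast_ne_zero.mpr hq
  rw [eAdd, ← Complex.exp_int_mul_two_pi_mul_I k]
  congr 1
  push_cast
  field_simp

lemma eAdd_eq_of_intCast_eq (q : ℕ) {a b : ℤ} (h : (a : ZMod q) = (b : ZMod q)) :
    eAdd q a = eAdd q b := by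
  obtain ⟨k, hk⟩ := (ZMod.intCast_eq_intCast_iff_dvd_sub a b q).mp h
  rw [show b = a + q * k by omega, eAdd_add, eAdd_natCast_mul, mul_one]

lemma eAdd_mul_natCast_mul (q₁ : ℕ) {q₂ : ℕ} (hq₂ : q₂ ≠ 0) (a : ℤ) :
    eAdd (q₁ * q₂) (q₂ * a) = eAdd q₁ a := by
  rcases eq_or_ne q₁ 0 with rfl | hq₁
  · simp [eAdd]
  have h₁ : (q₁ : ℂ) ≠ 0 := Nat.cast_ne_zero.mpr hq₁
  have h₂ : (q₂ : ℂ) ≠ 0 := Nat.cast_ne_zero.mpr hq₂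
  rw [eAdd, eAdd]
  congr 1
  push_cast
  field_simp

lemma eAdd_mul_of_coprime {q₁ q₂ : ℕ} [NeZero q₁] [NeZero q₂] (hco : Nat.Coprime q₁ q₂)
    {b₁ b₂ : ℤ} (hb₂ : (((q₂ : ℤ) * b₂ : ℤ) : ZMod q₁) = 1)
    (hb₁ : (((q₁ : ℤ) * b₁ : ℤ) : ZMod q₂) = 1) (a : ℤ) :
    eAdd (q₁ * q₂) a = eAdd q₁ (b₂ * a) * eAdd q₂ (b₁ * a) := by
  have hunit : (((q₂ : ℤ) * b₂ + q₁ * b₁ : ℤ) : ZMod (q₁ * q₂)) = 1 := by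
    apply (ZMod.chineseRemainder hco).injective
    rw [map_intCast, map_one]
    ext <;> simp_all
  rw [← eAdd_mul_natCast_mul q₁ (NeZero.ne q₂), mul_comm q₁ q₂,
    ← eAdd_mul_natCast_mul q₂ (NeZero.ne q₁), mul_comm q₂ q₁, ← eAdd_add]
  apply eAdd_eq_of_intCast_eq
  rw [← one_mul (a : ZMod (q₁ * q₂)), ← hunit]
  push_cast
  ring

lemma intCast_val_eq_castHom {q Q : ℕ} [NeZero Q] (h : q ∣ Q) (x : ZMod Q) :
    ((x.val : ℤ) : ZMod q) = ZMod.castHom h (ZMod q) x := by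
  rw [Int.cast_natCast, ZMod.natCast_val, ZMod.castHom_apply]

def kloPhase {q : ℕ} (m n : ℤ) (x : (ZMod q)ˣ) : ℤ :=
  m * ((x : ZMod q).val : ℤ) + n * (((x⁻¹ : (ZMod q)ˣ) : ZMod q).val : ℤ)

lemma klo_eq_sum_eAdd_kloPhase (m n : ℤ) (q : ℕ) [NeZero q] :
    klo m n q = ∑ x : (ZMod q)ˣ, eAdd q (kloPhase m n x) :=
  rfl

lemma kloTwist_eq_sum_eAdd_kloPhase {d : ℕ} (ψ : DirichletCharacter ℂ d) (m n : ℤ) (q : ℕ)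
    [NeZero q] (h : d ∣ q) :
    kloTwist ψ m n q h =
      ∑ x : (ZMod q)ˣ, ψ (ZMod.castHom h (ZMod d) (x : ZMod q)) * eAdd q (kloPhase m n x) :=
  rfl

lemma eAdd_mul_kloPhase_eq_units_map {q Q : ℕ} [NeZero q] [NeZero Q] (h : q ∣ Q)
    (c m n : ℤ) (x : (ZMod Q)ˣ) :
    eAdd q (c * kloPhase m n x) =
      eAdd q (kloPhase (m * c) (n * c) (Units.map (ZMod.castHom h (ZMod q)).toMonoidHom x)) := by
  apply eAdd_eq_of_intCast_eq
  simp only [kloPhase, Int.cast_add, Int.cast_mul, intCast_val_eq_castHom h, ← map_inv,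
    Units.coe_map, RingHom.toMonoidHom_eq_coe, MonoidHom.coe_coe, Int.cast_natCast,
    ZMod.natCast_zmod_val]
  ring

def ZMod.unitsChineseRemainder {q₁ q₂ : ℕ} (hco : Nat.Coprime q₁ q₂) :
    (ZMod (q₁ * q₂))ˣ ≃* (ZMod q₁)ˣ × (ZMod q₂)ˣ :=
  (Units.mapEquiv (ZMod.chineseRemainder hco).toMulEquiv).trans MulEquiv.prodUnits

lemma ZMod.unitsChineseRemainder_apply {q₁ q₂ : ℕ} (hco : Nat.Coprime q₁ q₂)
    (x : (ZMod (q₁ * q₂))ˣ) :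
    ZMod.unitsChineseRemainder hco x =
      (Units.map (ZMod.castHom (dvd_mul_right q₁ q₂) (ZMod q₁)).toMonoidHom x,
        Units.map (ZMod.castHom (dvd_mul_left q₂ q₁) (ZMod q₂)).toMonoidHom x) := by
  ext
  · exact congr($(RingHom.ext_zmod ((RingHom.fst _ _).comp (ZMod.chineseRemainder hco).toRingHom)
      (ZMod.castHom (dvd_mul_right q₁ q₂) (ZMod q₁))) x)
  · exact congr($(RingHom.ext_zmod ((RingHom.snd _ _).comp (ZMod.chineseRemainder hco).toRingHom)
      (ZMod.castHom (dvd_mul_left q₂ q₁) (ZMod q₂))) x)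

/-- Twisted multiplicativity of Kloosterman sums. -/
theorem stmt_10 (q₁ q₂ : ℕ) [NeZero q₁] [NeZero q₂] (hco : Nat.Coprime q₁ q₂)
    (d : ℕ) (hd : d ∣ q₁) (ψ : DirichletCharacter ℂ d) (m n : ℤ)
    (b₂ : ℤ) (hb₂ : (((q₂ : ℤ) * b₂ : ℤ) : ZMod q₁) = 1)
    (b₁ : ℤ) (hb₁ : (((q₁ : ℤ) * b₁ : ℤ) : ZMod q₂) = 1) :
    kloTwist ψ m n (q₁ * q₂) (hd.mul_right q₂) =
      kloTwist ψ (m * b₂) (n * b₂) q₁ hd * klo (m * b₁) (n * b₁) q₂ := by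
  rw [kloTwist_eq_sum_eAdd_kloPhase, kloTwist_eq_sum_eAdd_kloPhase, klo_eq_sum_eAdd_kloPhase,
    Finset.sum_mul_sum, ← Fintype.sum_prod_type']
  refine Fintype.sum_equiv (ZMod.unitsChineseRemainder hco).toEquiv _ _ fun x => ?_
  have hψ : ψ (ZMod.castHom (hd.mul_right q₂) (ZMod d) x) =
      ψ (ZMod.castHom hd (ZMod d) (ZMod.castHom (dvd_mul_right q₁ q₂) (ZMod q₁) x)) := by
    rw [← RingHom.comp_apply, ZMod.castHom_comp]
  rw [MulEquiv.toEquiv_eq_coe, MulEquiv.coe_toEquiv, ZMod.unitsChineseRemainder_apply,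
    eAdd_mul_of_coprime hco hb₂ hb₁, eAdd_mul_kloPhase_eq_units_map (dvd_mul_right q₁ q₂),
    eAdd_mul_kloPhase_eq_units_map (dvd_mul_left q₂ q₁), hψ]
  exact (mul_assoc _ _ _).symm
end
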